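/- Let ω ∈ ℂ be a primitive cube root of unity and let L₁ = {[x₀:x₁:x₂:x₃:x₄] ∈ ℙ⁴(ℂ) : x₀ + x₃ = 0, x₄ + x₁ = 0, x₂ = 0}. Then: (i) L₁ is contained in the quadric Q = {2x₂² = x₁x₃ − x₀x₄}; (ii) τ(L₁) = L₁ and σ(L₁) = L₁; (iii) the set {t ∈ ℙ¹(ℂ) : ψ(t) ∈ L₁} equals {[1:−1], [1:−ω], [1:−ω²]}. In particular, L₁ is a G-invariant trisecant line of the curve Γ₁ = ψ(ℙ¹). -/

import Mathlib

noncomputable section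

/-- Projective 4-space over ℂ. -/
abbrev P4 := Projectivization ℂ (Fin 5 → ℂ)

/-- Projective line over ℂ. -/
abbrev P1 := Projectivization ℂ (Fin 2 → ℂ)

/-- Homogeneous coordinates of ψ([x:y]) = [x⁵ : 2x³y² + y⁵ : x⁴y + xy⁴ : 2x²y³ + x⁵ : y⁵]. -/
def psiVec (x y : ℂ) : Fin 5 → ℂ :=
  ![x ^ 5, 2 * x ^ 3 * y ^ 2 + y ^ 5, x ^ 4 * y + x * y ^ 4, 2 * x ^ 2 * y ^ 3 + x ^ 5, y ^ 5]

lemma psiVec_rep_ne_zero (t : P1) : psiVec (t.rep 0) (t.rep 1) ≠ 0 := by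
  intro h
  apply t.rep_nonzero
  have h0 := congrFun h 0
  have h4 := congrFun h 4
  simp [psiVec] at h0 h4
  funext i
  fin_cases i
  · simpa using h0
  · simpa using h4

/-- The map ψ : ℙ¹ → ℙ⁴ with image the rational quintic Γ₁. -/
def psiP (t : P1) : P4 :=
  Projectivization.mk ℂ (psiVec (t.rep 0) (t.rep 1)) (psiVec_rep_ne_zero t)

/-- The line L₁ = {x₀ + x₃ = 0, x₄ + x₁ = 0, x₂ = 0} ⊂ ℙ⁴. -/
def lineL1 : Set P4 :=
  {p : P4 | p.rep 0 + p.rep 3 = 0 ∧ p.rep 4 + p.rep 1 = 0 ∧ p.rep 2 = 0}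

/-- The quadric threefold Q = {2x₂² = x₁x₃ − x₀x₄} ⊂ ℙ⁴. -/
def quadricQ4 : Set P4 :=
  {p : P4 | 2 * p.rep 2 ^ 2 = p.rep 1 * p.rep 3 - p.rep 0 * p.rep 4}

/-- A diagonal linear automorphism of ℂⁿ. -/
def diagEquiv {n : ℕ} (d : Fin n → ℂ) (hd : ∀ i, d i ≠ 0) : (Fin n → ℂ) ≃ₗ[ℂ] (Fin n → ℂ) :=
  LinearEquiv.piCongrRight fun i => LinearEquiv.smulOfNeZero ℂ ℂ (d i) (hd i)

/-- The linear automorphism of ℂ⁵ inducing τ : [x₀:x₁:x₂:x₃:x₄] ↦ [x₄:x₃:x₂:x₁:x₀]. -/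
def tauEquiv4 : (Fin 5 → ℂ) ≃ₗ[ℂ] (Fin 5 → ℂ) :=
  LinearEquiv.funCongrLeft ℂ ℂ (Equiv.subLeft (4 : Fin 5))

/-- The projective involution τ of ℙ⁴. -/
def tauP4 : P4 → P4 := Projectivization.map tauEquiv4.toLinearMap tauEquiv4.injective

/-- The linear automorphism of ℂ⁵ inducing
σ : [x₀:x₁:x₂:x₃:x₄] ↦ [x₀:ω²x₁:ωx₂:x₃:ω²x₄], for ω ≠ 0. -/
def sigmaEquiv4 (ω : ℂ) (hω : ω ≠ 0) : (Fin 5 → ℂ) ≃ₗ[ℂ] (Fin 5 → ℂ) :=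
  diagEquiv ![1, ω ^ 2, ω, 1, ω ^ 2]
    (by intro i; fin_cases i <;> simp [hω])

/-- The projective automorphism σ of ℙ⁴. -/
def sigmaP4 (ω : ℂ) (hω : ω ≠ 0) : P4 → P4 :=
  Projectivization.map (sigmaEquiv4 ω hω).toLinearMap (sigmaEquiv4 ω hω).injective

/-!
The line `L₁` is cut out by three linear forms which `τ` permutes and `σ` rescales; as `τ` and `σ`
have finite order, mapping `L₁` into itself forces them to map it onto itself. On `ψ[x:y]` the
three forms become `2x²s`, `2y²s` and `xys` with `s = x³ + y³`, so `ψ[x:y] ∈ L₁` iff `s = 0`,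
and `s = (y + x)(y + ωx)(y + ω²x)`.
-/

theorem Set.MapsTo.image_eq_of_iterate_eq_id {α : Type*} {f : α → α} {s : Set α}
    (h : Set.MapsTo f s s) {n : ℕ} (hn : n ≠ 0) (hf : f^[n] = id) : f '' s = s := by
  refine Set.SurjOn.image_eq_of_mapsTo (fun x hx => ⟨f^[n - 1] x, h.iterate _ hx, ?_⟩) h
  rw [← Function.iterate_succ_apply' f, Nat.succ_eq_add_one, Nat.sub_one_add_one hn, hf, id]

namespace Projectivization

variable {K V : Type*} [Field K] [AddCommGroup V] [Module K V]

theorem map_iterate (f : Module.End K V) (hf : Function.Injective f) (n : ℕ) :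
    (map f hf)^[n] = map (f ^ n) (by rw [Module.End.coe_pow]; exact hf.iterate n) := by
  induction n with
  | zero => exact map_id.symm
  | succ n ih =>
    rw [Function.iterate_succ', ih, ← map_comp]
    congr 1
    exact (pow_succ' f n).symm

theorem map_iterate_eq_id {f : Module.End K V} (hf : Function.Injective f) {n : ℕ}
    (h : f ^ n = 1) : (map f hf)^[n] = id := by
  rw [map_iterate, ← map_id]
  congr 1

theorem mk_eq_mk_iff_mul_eq_mul (u v : Fin 2 → K) (hu : u ≠ 0) (hv : v ≠ 0) :
    mk K u hu = mk K v hv ↔ u 0 * v 1 = u 1 * v 0 := by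
  rw [mk_eq_mk_iff']
  constructor
  · rintro ⟨a, rfl⟩
    simp only [Pi.smul_apply, smul_eq_mul]
    ring
  · intro h
    by_cases hv0 : v 0 = 0
    · have hv1 : v 1 ≠ 0 := fun hv1 => hv (by ext i; fin_cases i <;> assumption)
      have hu0 : u 0 = 0 := by simpa [hv0, hv1] using h
      exact ⟨u 1 / v 1, funext fun i => by fin_cases i <;> simp [hv0, hu0, hv1]⟩
    · refine ⟨u 0 / v 0, funext fun i => ?_⟩
      fin_cases i <;> simp [hv0, div_mul_eq_mul_div, h]

end Projectivization

theorem IsPrimitiveRoot.pow_three_add_pow_three {R : Type*} [CommRing R] [IsDomain R] {ω : R}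
    (hω : IsPrimitiveRoot ω 3) (x y : R) :
    x ^ 3 + y ^ 3 = (y + x) * (y + ω * x) * (y + ω ^ 2 * x) := by
  have hsum : 1 + ω + ω ^ 2 = 0 := by
    simpa [Finset.sum_range_succ] using hω.geom_sum_eq_zero (by norm_num)
  linear_combination (-x ^ 3 - x ^ 2 * y) * hω.pow_eq_one + (-x * y ^ 2 - x ^ 2 * y) * hsum

theorem sigmaEquiv4_apply (ω : ℂ) (hω : ω ≠ 0) (v : Fin 5 → ℂ) (i : Fin 5) :
    sigmaEquiv4 ω hω v i = ![1, ω ^ 2, ω, 1, ω ^ 2] i * v i :=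
  rfl

theorem mk_mem_lineL1_iff (v : Fin 5 → ℂ) (hv : v ≠ 0) :
    Projectivization.mk ℂ v hv ∈ lineL1 ↔ v 0 + v 3 = 0 ∧ v 4 + v 1 = 0 ∧ v 2 = 0 := by
  obtain ⟨a, ha⟩ := Projectivization.exists_smul_eq_mk_rep ℂ v hv
  simp only [lineL1, Set.mem_ofPred_eq, ← ha, Pi.smul_apply, Units.smul_def, smul_eq_mul,
    ← mul_add, mul_eq_zero, a.ne_zero, false_or]

theorem lineL1_subset_quadricQ4 : lineL1 ⊆ quadricQ4 := by
  rintro p ⟨h03, h41, h2⟩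
  show 2 * p.rep 2 ^ 2 = p.rep 1 * p.rep 3 - p.rep 0 * p.rep 4
  linear_combination 2 * p.rep 2 * h2 + p.rep 4 * h03 - p.rep 3 * h41

theorem tauP4_mapsTo_lineL1 : Set.MapsTo tauP4 lineL1 lineL1 := by
  intro p
  induction p using Projectivization.ind with | h v hv =>
  simp only [tauP4, Projectivization.map_mk, mk_mem_lineL1_iff]
  rintro ⟨h03, h41, h2⟩
  -- `tauEquiv4 v i` unfolds to `v (4 - i)`, so `τ` just swaps the first two equations
  exact ⟨h41, h03, h2⟩

theorem sigmaP4_mapsTo_lineL1 (ω : ℂ) (hω : ω ≠ 0) :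
    Set.MapsTo (sigmaP4 ω hω) lineL1 lineL1 := by
  intro p
  induction p using Projectivization.ind with | h v hv =>
  simp only [sigmaP4, Projectivization.map_mk, mk_mem_lineL1_iff]
  rintro ⟨h03, h41, h2⟩
  simp [sigmaEquiv4_apply, ← mul_add, h03, h41, h2]

theorem tauEquiv4_sq : (tauEquiv4 : Module.End ℂ (Fin 5 → ℂ)) ^ 2 = 1 :=
  LinearMap.ext fun v => funext fun i => congrArg v (sub_sub_cancel 4 i)

theorem sigmaEquiv4_pow_three {ω : ℂ} (hω : ω ≠ 0) (h3 : ω ^ 3 = 1) :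
    (sigmaEquiv4 ω hω : Module.End ℂ (Fin 5 → ℂ)) ^ 3 = 1 := by
  have hd : ∀ i, (![1, ω ^ 2, ω, 1, ω ^ 2] i) ^ 3 = 1 := by
    intro i
    fin_cases i <;> simp [h3, pow_right_comm _ 2 3]
  rw [pow_three]
  refine LinearMap.ext fun v => funext fun i => ?_
  simp only [Module.End.mul_apply, LinearEquiv.coe_coe, sigmaEquiv4_apply, Module.End.one_apply]
  linear_combination v i * hd i

theorem tauP4_iterate_two : tauP4^[2] = id :=
  Projectivization.map_iterate_eq_id _ tauEquiv4_sq

theorem sigmaP4_iterate_three {ω : ℂ} (hω : ω ≠ 0) (h3 : ω ^ 3 = 1) : (sigmaP4 ω hω)^[3] = id :=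
  Projectivization.map_iterate_eq_id _ (sigmaEquiv4_pow_three hω h3)

theorem psiP_mem_lineL1_iff (t : P1) : psiP t ∈ lineL1 ↔ t.rep 0 ^ 3 + t.rep 1 ^ 3 = 0 := by
  have hxy : t.rep 0 ≠ 0 ∨ t.rep 1 ≠ 0 := by
    by_contra! h
    exact t.rep_nonzero (funext fun i => by fin_cases i <;> simp [h.1, h.2])
  simp only [psiP, mk_mem_lineL1_iff, psiVec, Matrix.cons_val]
  generalize t.rep 0 = x at *
  generalize t.rep 1 = y at *
  constructor
  · rintro ⟨h03, h41, -⟩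
    have hx : x ^ 2 * (x ^ 3 + y ^ 3) = 0 := by linear_combination h03 / 2
    have hy : y ^ 2 * (x ^ 3 + y ^ 3) = 0 := by linear_combination h41 / 2
    by_contra hs
    simp only [mul_eq_zero, hs, or_false, pow_eq_zero_iff two_ne_zero] at hx hy
    exact hxy.elim (· hx) (· hy)
  · intro h
    exact ⟨by linear_combination 2 * x ^ 2 * h, by linear_combination 2 * y ^ 2 * h,
      by linear_combination x * y * h⟩

theorem P1_eq_mk_one_neg_iff (t : P1) (c : ℂ) (hc : ![1, -c] ≠ 0) :
    t = Projectivization.mk ℂ ![1, -c] hc ↔ t.rep 1 + c * t.rep 0 = 0 := by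
  conv_lhs => rw [← t.mk_rep]
  rw [Projectivization.mk_eq_mk_iff_mul_eq_mul]
  simp only [Matrix.cons_val, mul_one, mul_neg]
  constructor <;> intro h <;> linear_combination -h

/-- (i) L₁ ⊂ Q; (ii) L₁ is invariant under τ and σ; (iii) ψ(t) ∈ L₁ exactly for
t ∈ {[1:−1], [1:−ω], [1:−ω²]}.  In particular L₁ is a G-invariant trisecant line of Γ₁. -/
theorem stmt11 (ω : ℂ) (hω : IsPrimitiveRoot ω 3) :
    lineL1 ⊆ quadricQ4 ∧
      (tauP4 '' lineL1 = lineL1 ∧ sigmaP4 ω (hω.ne_zero (by norm_num)) '' lineL1 = lineL1) ∧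
      {t : P1 | psiP t ∈ lineL1} =
        {Projectivization.mk ℂ ![1, -1] (by intro h; simpa using congrFun h 0),
         Projectivization.mk ℂ ![1, -ω] (by intro h; simpa using congrFun h 0),
         Projectivization.mk ℂ ![1, -ω ^ 2] (by intro h; simpa using congrFun h 0)} := by
  refine ⟨lineL1_subset_quadricQ4,
    ⟨tauP4_mapsTo_lineL1.image_eq_of_iterate_eq_id two_ne_zero tauP4_iterate_two,
      (sigmaP4_mapsTo_lineL1 _ _).image_eq_of_iterate_eq_id three_ne_zero
        (sigmaP4_iterate_three _ hω.pow_eq_one)⟩, ?_⟩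
  ext t
  simp only [Set.mem_ofPred_eq, psiP_mem_lineL1_iff, hω.pow_three_add_pow_three,
    Set.mem_insert_iff, Set.mem_singleton_iff, P1_eq_mk_one_neg_iff, mul_eq_zero, one_mul,
    or_assoc]
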